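/- Let f : [0,∞) → ℝ be a C¹ strictly convex function with f(0)=f'(0)=0 and suppose lim_{x→0⁺} log f(x)/log x = α with 1 < α < ∞. Then lim_{x→0⁺} log(x·f'(x) - f(x)) / log f'(x) = α/(α-1). -/

import Mathlib

/-!
Write `u ≍ x ^ β` (`HasLogOrder u β`) when `log u(x) / log x → β` as `x → 0⁺`. Tangent lines of the
convex `f` give `f x ≤ x f'(x) ≤ f (2x)`, so `x f'(x) ≍ x ^ α` and `f'(x) ≍ x ^ (α - 1)`. The Legendre term
`g(x) = x f'(x) - f(x) = max_y (y f'(x) - f(y))` is at most `x f'(x)`, and evaluating at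
`y = x ^ (1 + δ)` gives `g(x) ≥ x ^ δ · x f'(x) - f(x ^ (1 + δ))`, whose second term has order
`α (1 + δ) > α + δ` because `α > 1`. Hence `g ≍ x ^ α`, and the ratio of logarithms tends to
`α / (α - 1)`. The sign `f ≥ 0` also comes from `α > 1`: a convex `f` with `f 0 = 0` that is negative
somewhere is at least linearly large near `0`.
-/

open Filter Topology Real Set

/-- Since `Real.log` is even, this only constrains `|u x|`. -/
def HasLogOrder (u : ℝ → ℝ) (β : ℝ) : Prop :=
  Tendsto (fun x => log (u x) / log x) (𝓝[>] 0) (𝓝 β)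

lemma rpow_le_iff_log_div_log_le {x v : ℝ} (γ : ℝ) (hx₀ : 0 < x) (hx₁ : x < 1) (hv : 0 < v) :
    x ^ γ ≤ v ↔ log v / log x ≤ γ := by
  rw [div_le_iff_of_neg (log_neg hx₀ hx₁), ← log_rpow hx₀,
    log_le_log_iff (rpow_pos_of_pos hx₀ γ) hv]

lemma le_rpow_iff_le_log_div_log {x v : ℝ} (γ : ℝ) (hx₀ : 0 < x) (hx₁ : x < 1) (hv : 0 < v) :
    v ≤ x ^ γ ↔ γ ≤ log v / log x := by
  rw [le_div_iff_of_neg (log_neg hx₀ hx₁), ← log_rpow hx₀,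
    log_le_log_iff hv (rpow_pos_of_pos hx₀ γ)]

lemma tendsto_rpow_nhdsGT_zero {p : ℝ} (hp : 0 < p) :
    Tendsto (fun x : ℝ => x ^ p) (𝓝[>] 0) (𝓝[>] 0) := by
  refine tendsto_nhdsWithin_iff.2 ⟨?_, ?_⟩
  · simpa [zero_rpow hp.ne'] using
      (continuousAt_rpow_const 0 p (Or.inr hp.le)).tendsto.mono_left nhdsWithin_le_nhds
  · filter_upwards [self_mem_nhdsWithin] with x (hx : 0 < x) using rpow_pos_of_pos hx p

lemma tendsto_const_mul_nhdsGT_zero {c : ℝ} (hc : 0 < c) :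
    Tendsto (fun x : ℝ => c * x) (𝓝[>] 0) (𝓝[>] 0) :=
  tendsto_iff_comap.2 (comap_mulLeft_nhdsGT_zero hc).ge

lemma eventually_rpow_lt {p c : ℝ} (hp : 0 < p) (hc : 0 < c) :
    ∀ᶠ x in 𝓝[>] (0 : ℝ), x ^ p < c :=
  ((tendsto_rpow_nhdsGT_zero hp).mono_right nhdsWithin_le_nhds).eventually_lt_const hc

lemma eventually_rpow_add_rpow_le {p q r : ℝ} (hq : p < q) (hr : p < r) :
    ∀ᶠ x in 𝓝[>] (0 : ℝ), x ^ q + x ^ r ≤ x ^ p := by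
  filter_upwards [eventually_rpow_lt (sub_pos.2 hq) one_half_pos,
    eventually_rpow_lt (sub_pos.2 hr) one_half_pos, self_mem_nhdsWithin] with x hxq hxr (hx : 0 < x)
  calc x ^ q + x ^ r = x ^ p * (x ^ (q - p) + x ^ (r - p)) := by
        rw [mul_add, ← rpow_add hx, ← rpow_add hx, add_sub_cancel, add_sub_cancel]
    _ ≤ x ^ p * 1 := by gcongr; linarith
    _ = x ^ p := mul_one _

namespace HasLogOrder

variable {u v : ℝ → ℝ} {β γ : ℝ}

lemma congr' (h : HasLogOrder u β) (huv : u =ᶠ[𝓝[>] 0] v) : HasLogOrder v β :=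
  Tendsto.congr' (huv.mono fun x hx => by rw [hx]) h

lemma eventually_abs_le_rpow (h : HasLogOrder u β) (hγ : γ < β) :
    ∀ᶠ x in 𝓝[>] 0, |u x| ≤ x ^ γ := by
  filter_upwards [h.eventually (lt_mem_nhds hγ), Ioo_mem_nhdsGT one_pos] with x hx ⟨hx₀, hx₁⟩
  rcases eq_or_ne (u x) 0 with hu | hu
  · simpa [hu] using rpow_nonneg hx₀.le γ
  · rw [le_rpow_iff_le_log_div_log γ hx₀ hx₁ (abs_pos.2 hu), log_abs]
    exact hx.le

lemma eventually_ne_zero (h : HasLogOrder u β) (hβ : 0 < β) : ∀ᶠ x in 𝓝[>] 0, u x ≠ 0 := by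
  filter_upwards [h.eventually (lt_mem_nhds hβ)] with x hx hu
  simp [hu] at hx

lemma eventually_rpow_le_abs (h : HasLogOrder u β) (hβ : 0 < β) (hγ : β < γ) :
    ∀ᶠ x in 𝓝[>] 0, x ^ γ ≤ |u x| := by
  filter_upwards [h.eventually (gt_mem_nhds hγ), h.eventually_ne_zero hβ,
    Ioo_mem_nhdsGT one_pos] with x hx hu ⟨hx₀, hx₁⟩
  rw [rpow_le_iff_log_div_log_le γ hx₀ hx₁ (abs_pos.2 hu), log_abs]
  exact hx.le

lemma of_eventually_rpow_le_of_eventually_le_rpow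
    (hlower : ∀ γ > β, ∀ᶠ x in 𝓝[>] 0, x ^ γ ≤ u x)
    (hupper : ∀ γ < β, ∀ᶠ x in 𝓝[>] 0, u x ≤ x ^ γ) :
    HasLogOrder u β := by
  have hpos : ∀ᶠ x in 𝓝[>] 0, 0 < u x := by
    filter_upwards [hlower (β + 1) (lt_add_one β), self_mem_nhdsWithin] with x hx (hx₀ : 0 < x)
    exact (rpow_pos_of_pos hx₀ _).trans_le hx
  refine tendsto_order.2 ⟨fun a ha => ?_, fun b hb => ?_⟩
  · obtain ⟨γ, haγ, hγβ⟩ := exists_between ha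
    filter_upwards [hupper γ hγβ, hpos, Ioo_mem_nhdsGT one_pos] with x hx hux ⟨hx₀, hx₁⟩
    exact haγ.trans_le ((le_rpow_iff_le_log_div_log γ hx₀ hx₁ hux).1 hx)
  · obtain ⟨γ, hβγ, hγb⟩ := exists_between hb
    filter_upwards [hlower γ hβγ, hpos, Ioo_mem_nhdsGT one_pos] with x hx hux ⟨hx₀, hx₁⟩
    exact ((rpow_le_iff_log_div_log_le γ hx₀ hx₁ hux).1 hx).trans_lt hγb

lemma mul (hu : HasLogOrder u β) (hv : HasLogOrder v γ) (hu₀ : ∀ᶠ x in 𝓝[>] 0, u x ≠ 0)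
    (hv₀ : ∀ᶠ x in 𝓝[>] 0, v x ≠ 0) :
    HasLogOrder (fun x => u x * v x) (β + γ) := by
  refine (Tendsto.add hu hv).congr' ?_
  filter_upwards [hu₀, hv₀] with x hux hvx
  rw [log_mul hux hvx, add_div]

lemma comp {φ : ℝ → ℝ} {p : ℝ} (hu : HasLogOrder u β) (hφ : HasLogOrder φ p)
    (hφ₀ : Tendsto φ (𝓝[>] 0) (𝓝[>] 0)) :
    HasLogOrder (fun x => u (φ x)) (β * p) := by
  refine (Tendsto.mul (Tendsto.comp hu hφ₀) hφ).congr' ?_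
  filter_upwards [hφ₀.eventually (Ioo_mem_nhdsGT one_pos)] with x ⟨h₀, h₁⟩
  exact div_mul_div_cancel₀ (log_neg h₀ h₁).ne

lemma eventually_rpow_le_abs_sub_abs (hu : HasLogOrder u β) (hv : HasLogOrder v γ) (hβ : 0 < β)
    (hβγ : β < γ) {δ : ℝ} (hδ : β < δ) :
    ∀ᶠ x in 𝓝[>] 0, x ^ δ ≤ |u x| - |v x| := by
  obtain ⟨γ₁, hβγ₁, hγ₁⟩ := exists_between (lt_min hδ hβγ)
  obtain ⟨γ₂, hγ₁γ₂, hγ₂γ⟩ := exists_between (hγ₁.trans_le (min_le_right _ _))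
  filter_upwards [hu.eventually_rpow_le_abs hβ hβγ₁, hv.eventually_abs_le_rpow hγ₂γ,
    eventually_rpow_add_rpow_le (hγ₁.trans_le (min_le_left _ _)) hγ₁γ₂] with x hux hvx hsum
  linarith

lemma tendsto_log_div_log (hu : HasLogOrder u β) (hv : HasLogOrder v γ) (hγ : γ ≠ 0) :
    Tendsto (fun x => log (u x) / log (v x)) (𝓝[>] 0) (𝓝 (β / γ)) := by
  refine (Tendsto.div hu hv hγ).congr' ?_
  filter_upwards [Ioo_mem_nhdsGT one_pos] with x ⟨hx₀, hx₁⟩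
  exact div_div_div_cancel_right₀ (log_neg hx₀ hx₁).ne _ _

end HasLogOrder

lemma hasLogOrder_rpow (p : ℝ) : HasLogOrder (fun x => x ^ p) p := by
  refine tendsto_const_nhds.congr' ?_
  filter_upwards [Ioo_mem_nhdsGT one_pos] with x ⟨hx₀, hx₁⟩
  rw [log_rpow hx₀, mul_div_cancel_right₀ _ (log_neg hx₀ hx₁).ne]

lemma hasLogOrder_const_mul {c : ℝ} (hc : 0 < c) : HasLogOrder (fun x => c * x) 1 := by
  have : Tendsto (fun x => log c / log x + 1) (𝓝[>] 0) (𝓝 (0 + 1)) :=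
    (tendsto_const_nhds.div_atBot tendsto_log_nhdsGT_zero).add_const 1
  rw [zero_add] at this
  refine this.congr' ?_
  filter_upwards [Ioo_mem_nhdsGT one_pos] with x ⟨hx₀, hx₁⟩
  rw [log_mul hc.ne' hx₀.ne', add_div, div_self (log_neg hx₀ hx₁).ne]

namespace ConvexOn

variable {S : Set ℝ} {f : ℝ → ℝ} {α : ℝ}

lemma mul_deriv_sub_le_mul_deriv_sub (hf : ConvexOn ℝ S f) {x y : ℝ} (hx : x ∈ S) (hy : y ∈ S)
    (hfd : DifferentiableAt ℝ f x) :
    y * deriv f x - f y ≤ x * deriv f x - f x := by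
  rcases lt_trichotomy x y with hxy | rfl | hxy
  · have := hf.deriv_le_slope hx hy hxy hfd
    rw [slope_def_field, le_div_iff₀ (sub_pos.2 hxy)] at this
    linarith
  · rfl
  · have := hf.slope_le_deriv hy hx hxy hfd
    rw [slope_def_field, div_le_iff₀ (sub_pos.2 hxy)] at this
    linarith

lemma nonneg_of_hasLogOrder (hf : ConvexOn ℝ (Ici 0) f) (hf0 : f 0 = 0) (hfα : HasLogOrder f α)
    (hα : 1 < α) {x : ℝ} (hx : 0 < x) : 0 ≤ f x := by
  by_contra! hneg
  have hc : f x / x < 0 := div_neg_of_neg_of_pos hneg hx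
  have hchord : ∀ y ∈ Ioc 0 x, f y ≤ f x / x * y := fun y ⟨hy₀, hyx⟩ => by
    have := hf.secant_mono (a := 0) self_mem_Ici hy₀.le hx.le hy₀.ne' hx.ne' hyx
    simp only [hf0, sub_zero] at this
    rwa [div_le_iff₀ hy₀] at this
  obtain ⟨y, hfy, hy, hy₀, hyx⟩ := ((hfα.eventually_abs_le_rpow (γ := (α + 1) / 2) (by linarith)).and
    ((eventually_rpow_lt (p := (α - 1) / 2) (by linarith) (neg_pos.2 hc)).and
      (Ioo_mem_nhdsGT hx))).exists
  have hsplit : y ^ ((α + 1) / 2) = y ^ ((α - 1) / 2) * y := by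
    rw [← rpow_add_one hy₀.ne']; ring_nf
  have := mul_lt_mul_of_pos_right hy hy₀
  linarith [hchord y ⟨hy₀, hyx.le⟩, neg_abs_le (f y)]

end ConvexOn

namespace ConvexOn

variable {f : ℝ → ℝ} {α : ℝ}

lemma le_mul_deriv (hf : ConvexOn ℝ (Ici 0) f) (hf0 : f 0 = 0) {x : ℝ} (hx : 0 < x)
    (hfd : DifferentiableAt ℝ f x) : f x ≤ x * deriv f x := by
  have := hf.mul_deriv_sub_le_mul_deriv_sub hx.le self_mem_Ici hfd
  linarith

lemma hasLogOrder_mul_deriv (hf : ConvexOn ℝ (Ici 0) f) (hf0 : f 0 = 0)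
    (hd : ∀ x, 0 < x → DifferentiableAt ℝ f x) (hfα : HasLogOrder f α) (hα : 1 < α) :
    HasLogOrder (fun x => x * deriv f x) α := by
  have hf2 : HasLogOrder (fun x => f (2 * x)) α := by
    simpa using hfα.comp (hasLogOrder_const_mul two_pos) (tendsto_const_mul_nhdsGT_zero two_pos)
  refine HasLogOrder.of_eventually_rpow_le_of_eventually_le_rpow (fun γ hγ => ?_) (fun γ hγ => ?_)
  · filter_upwards [hfα.eventually_rpow_le_abs (by linarith) hγ, self_mem_nhdsWithin]
      with x hx (hx₀ : 0 < x)
    rw [abs_of_nonneg (hf.nonneg_of_hasLogOrder hf0 hfα hα hx₀)] at hx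
    linarith [hf.le_mul_deriv hf0 hx₀ (hd x hx₀)]
  · filter_upwards [hf2.eventually_abs_le_rpow hγ, self_mem_nhdsWithin] with x hx (hx₀ : 0 < x)
    have := hf.mul_deriv_sub_le_mul_deriv_sub (y := 2 * x) hx₀.le (by simp [hx₀.le]) (hd x hx₀)
    linarith [le_abs_self (f (2 * x)), hf.nonneg_of_hasLogOrder hf0 hfα hα hx₀]

lemma hasLogOrder_deriv (hf : ConvexOn ℝ (Ici 0) f) (hf0 : f 0 = 0)
    (hd : ∀ x, 0 < x → DifferentiableAt ℝ f x) (hfα : HasLogOrder f α) (hα : 1 < α) :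
    HasLogOrder (deriv f) (α - 1) := by
  have hxf' := hf.hasLogOrder_mul_deriv hf0 hd hfα hα
  have := (hasLogOrder_rpow (-1)).mul hxf'
    (eventually_mem_nhdsWithin.mono fun x (hx : 0 < x) => (rpow_pos_of_pos hx _).ne')
    (hxf'.eventually_ne_zero (by linarith))
  rw [neg_add_eq_sub] at this
  refine this.congr' (eventually_mem_nhdsWithin.mono fun x (hx : 0 < x) => ?_)
  dsimp only
  rw [rpow_neg_one, inv_mul_cancel_left₀ hx.ne']

lemma hasLogOrder_mul_deriv_sub (hf : ConvexOn ℝ (Ici 0) f) (hf0 : f 0 = 0)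
    (hd : ∀ x, 0 < x → DifferentiableAt ℝ f x) (hfα : HasLogOrder f α) (hα : 1 < α) :
    HasLogOrder (fun x => x * deriv f x - f x) α := by
  have hxf' := hf.hasLogOrder_mul_deriv hf0 hd hfα hα
  have hnonneg : ∀ x, 0 < x → 0 ≤ f x := fun x => hf.nonneg_of_hasLogOrder hf0 hfα hα
  refine HasLogOrder.of_eventually_rpow_le_of_eventually_le_rpow (fun γ hγ => ?_) (fun γ hγ => ?_)
  · obtain ⟨δ, hδ, hδγ⟩ : ∃ δ, 0 < δ ∧ α + δ < γ := ⟨(γ - α) / 2, by linarith, by linarith⟩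
    have hu : HasLogOrder (fun x => x ^ δ * (x * deriv f x)) (δ + α) :=
      (hasLogOrder_rpow δ).mul hxf'
        (eventually_mem_nhdsWithin.mono fun x (hx : 0 < x) => (rpow_pos_of_pos hx _).ne')
        (hxf'.eventually_ne_zero (by linarith))
    have hv : HasLogOrder (fun x => f (x ^ (1 + δ))) (α * (1 + δ)) :=
      hfα.comp (hasLogOrder_rpow _) (tendsto_rpow_nhdsGT_zero (by linarith))
    filter_upwards [hu.eventually_rpow_le_abs_sub_abs hv (δ := γ) (by linarith) (by nlinarith)
      (by linarith), self_mem_nhdsWithin] with x hx (hx₀ : 0 < x)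
    have htangent := hf.mul_deriv_sub_le_mul_deriv_sub (y := x ^ (1 + δ)) hx₀.le
      (rpow_nonneg hx₀.le _) (hd x hx₀)
    have hsplit : x ^ (1 + δ) * deriv f x = x ^ δ * (x * deriv f x) := by
      rw [rpow_add hx₀, rpow_one]; ring
    have hxf'_nonneg : 0 ≤ x * deriv f x :=
      (hnonneg x hx₀).trans (hf.le_mul_deriv hf0 hx₀ (hd x hx₀))
    rw [abs_of_nonneg (mul_nonneg (rpow_nonneg hx₀.le δ) hxf'_nonneg)] at hx
    linarith [le_abs_self (f (x ^ (1 + δ)))]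
  · filter_upwards [hxf'.eventually_abs_le_rpow hγ, self_mem_nhdsWithin] with x hx (hx₀ : 0 < x)
    linarith [le_abs_self (x * deriv f x), hnonneg x hx₀]

end ConvexOn

theorem legendre_log_limit_general (f : ℝ → ℝ) (α : ℝ) (hα1 : 1 < α)
    (hC1 : ContDiffOn ℝ 1 f (Set.Ici (0:ℝ)))
    (hconv : StrictConvexOn ℝ (Set.Ici (0:ℝ)) f)
    (hf0 : f 0 = 0)
    (hreg : Tendsto (fun x => Real.log (f x) / Real.log x)
      (nhdsWithin 0 (Set.Ioi 0)) (nhds α)) :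
    Tendsto (fun x => Real.log (x * deriv f x - f x) / Real.log (deriv f x))
      (nhdsWithin 0 (Set.Ioi 0)) (nhds (α / (α - 1))) := by
  have hd : ∀ x, 0 < x → DifferentiableAt ℝ f x := fun x hx =>
    ((hC1.differentiableOn one_ne_zero) x hx.le).differentiableAt (Ici_mem_nhds hx)
  have hf := hconv.convexOn
  exact (hf.hasLogOrder_mul_deriv_sub hf0 hd hreg hα1).tendsto_log_div_log
    (hf.hasLogOrder_deriv hf0 hd hreg hα1) (by linarith)

/-- If `f` is `C¹`, strictly convex on `[0,∞)` with `f 0 = f' 0 = 0` and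
`log f(x)/log x → α`, then `log (x f'(x) - f(x)) / log f'(x) → α/(α-1)`. -/
theorem legendre_log_limit (f : ℝ → ℝ) (α : ℝ) (hα1 : 1 < α)
    (hC1 : ContDiffOn ℝ 1 f (Set.Ici (0:ℝ)))
    (hconv : StrictConvexOn ℝ (Set.Ici (0:ℝ)) f)
    (hf0 : f 0 = 0) (hf'0 : deriv f 0 = 0)
    (hreg : Tendsto (fun x => Real.log (f x) / Real.log x)
      (nhdsWithin 0 (Set.Ioi 0)) (nhds α)) :
    Tendsto (fun x => Real.log (x * deriv f x - f x) / Real.log (deriv f x))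
      (nhdsWithin 0 (Set.Ioi 0)) (nhds (α / (α - 1))) :=
  legendre_log_limit_general f α hα1 hC1 hconv hf0 hreg
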